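/- arXiv:1508.00353 — 2 statements merged into one kernel-verified Lean document; each statement's English description precedes it below -/
import Mathlib

section
/- If (λ,λ',λ'',λ''') ∈ Λ_n⁴ satisfies λ + λ' + λ'' + λ''' = 0 and all four points lie on the circle of radius √n centered at the origin, and the sum of any two of them is nonzero only if they are not antipodal, then in fact the multiset {λ,λ',λ'',λ'''} is a union of two antipodal pairs {μ,−μ} and {ν,−ν}. -/
private lemma mswap23 (x y z w : ℤ × ℤ) :
    ({x, y, z, w} : Multiset (ℤ × ℤ)) = {x, z, y, w} :=
  Multiset.coe_eq_coe.mpr (List.Perm.cons x (List.Perm.swap z y _))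

private lemma mswap_last (x y z w : ℤ × ℤ) :
    ({x, y, z, w} : Multiset (ℤ × ℤ)) = {x, w, y, z} :=
  Multiset.coe_eq_coe.mpr (List.Perm.cons x
    ((List.Perm.cons y (List.Perm.swap w z _)).trans (List.Perm.swap w y _)))

theorem stmt4 (n : ℕ) (hn : 1 ≤ n) (a b c d : ℤ × ℤ)
    (ha : a.1 ^ 2 + a.2 ^ 2 = (n : ℤ)) (hb : b.1 ^ 2 + b.2 ^ 2 = (n : ℤ))
    (hc : c.1 ^ 2 + c.2 ^ 2 = (n : ℤ)) (hd : d.1 ^ 2 + d.2 ^ 2 = (n : ℤ))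
    (hsum : a + b + c + d = 0)
    (htriv : ∀ p ∈ ({a, b, c, d} : Multiset (ℤ × ℤ)),
      ∀ q ∈ ({a, b, c, d} : Multiset (ℤ × ℤ)), p + q ≠ 0 → p ≠ -q) :
    ∃ μ ν : ℤ × ℤ, ({a, b, c, d} : Multiset (ℤ × ℤ)) = {μ, -μ, ν, -ν} := by
  clear htriv
  obtain ⟨a1, a2⟩ := a
  obtain ⟨b1, b2⟩ := b
  obtain ⟨c1, c2⟩ := c
  obtain ⟨d1, d2⟩ := d
  have h1 : a1 + b1 + c1 + d1 = 0 := congrArg Prod.fst hsum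
  have h2 : a2 + b2 + c2 + d2 = 0 := congrArg Prod.snd hsum
  have ha' : a1 ^ 2 + a2 ^ 2 = (n : ℤ) := ha
  have hb' : b1 ^ 2 + b2 ^ 2 = (n : ℤ) := hb
  have hc' : c1 ^ 2 + c2 ^ 2 = (n : ℤ) := hc
  have hd' : d1 ^ 2 + d2 ^ 2 = (n : ℤ) := hd
  clear ha hb hc hd hsum
  by_cases hab : a1 + b1 = 0 ∧ a2 + b2 = 0
  · -- a + b = 0, c + d = 0
    obtain ⟨e1, e2⟩ := hab
    refine ⟨(a1, a2), (c1, c2), ?_⟩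
    have k1 : b1 = -a1 := by omega
    have k2 : b2 = -a2 := by omega
    have k3 : d1 = -c1 := by omega
    have k4 : d2 = -c2 := by omega
    subst k1 k2 k3 k4
    rfl
  · have hs : 0 < (a1 + b1) ^ 2 + (a2 + b2) ^ 2 := by
      rcases not_and_or.mp hab with h | h <;> positivity
    -- d = -(a+b+c)
    have k3 : d1 = -(a1 + b1 + c1) := by omega
    have k4 : d2 = -(a2 + b2 + c2) := by omega
    subst k3 k4
    have hA : 2 * (a1 * (a1 + b1) + a2 * (a2 + b2)) = (a1 + b1) ^ 2 + (a2 + b2) ^ 2 := by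
      linear_combination ha' - hb'
    have hE : 2 * ((-c1) * (a1 + b1) + (-c2) * (a2 + b2)) = (a1 + b1) ^ 2 + (a2 + b2) ^ 2 := by
      linear_combination hc' - hd'
    have hus : (a1 + c1) * (a1 + b1) + (a2 + c2) * (a2 + b2) = 0 := by linarith
    by_cases hu : a1 + c1 = 0 ∧ a2 + c2 = 0
    · -- c = -a, d = -b
      obtain ⟨u1, u2⟩ := hu
      refine ⟨(a1, a2), (b1, b2), ?_⟩
      show ({(a1, a2), (b1, b2), (c1, c2), (-(a1 + b1 + c1), -(a2 + b2 + c2))} :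
          Multiset (ℤ × ℤ)) = {(a1, a2), (-a1, -a2), (b1, b2), (-b1, -b2)}
      have k1 : c1 = -a1 := by omega
      have k2 : c2 = -a2 := by omega
      subst k1 k2
      have e1 : (-(a1 + b1 + -a1), -(a2 + b2 + -a2)) = ((-b1 : ℤ), (-b2 : ℤ)) := by
        norm_num
      rw [e1]
      exact mswap23 _ _ _ _
    · -- cross product nonzero
      have hcross : (a1 + c1) * (a2 + b2) - (a2 + c2) * (a1 + b1) ≠ 0 := by
        intro h
        apply hu
        have p1 : (a1 + c1) * ((a1 + b1) ^ 2 + (a2 + b2) ^ 2) = 0 := by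
          linear_combination (a1 + b1) * hus + (a2 + b2) * h
        have p2 : (a2 + c2) * ((a1 + b1) ^ 2 + (a2 + b2) ^ 2) = 0 := by
          linear_combination (a2 + b2) * hus - (a1 + b1) * h
        constructor
        · rcases mul_eq_zero.mp p1 with h' | h'
          · exact h'
          · linarith
        · rcases mul_eq_zero.mp p2 with h' | h'
          · exact h'
          · linarith
      have hws : (b1 + c1) * (a1 + b1) + (b2 + c2) * (a2 + b2) = 0 := by
        have h2' : 2 * ((b1 + c1) * (a1 + b1) + (b2 + c2) * (a2 + b2)) = 0 := by
          linear_combination -hA - hE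
        linarith
      have h7 : (a1 - c1) * (a1 + c1) + (a2 - c2) * (a2 + c2) = 0 := by
        linear_combination ha' - hc'
      have hwu : (b1 + c1) * (a1 + c1) + (b2 + c2) * (a2 + c2) = 0 := by
        linear_combination hus - h7
      have hw1 : (b1 + c1) * ((a1 + c1) * (a2 + b2) - (a2 + c2) * (a1 + b1)) = 0 := by
        linear_combination (a2 + b2) * hwu - (a2 + c2) * hws
      have hw2 : (b2 + c2) * ((a1 + c1) * (a2 + b2) - (a2 + c2) * (a1 + b1)) = 0 := by
        linear_combination (a1 + c1) * hws - (a1 + b1) * hwu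
      have k1 : c1 = -b1 := by
        rcases mul_eq_zero.mp hw1 with h' | h'
        · omega
        · exact absurd h' hcross
      have k2 : c2 = -b2 := by
        rcases mul_eq_zero.mp hw2 with h' | h'
        · omega
        · exact absurd h' hcross
      refine ⟨(a1, a2), (b1, b2), ?_⟩
      show ({(a1, a2), (b1, b2), (c1, c2), (-(a1 + b1 + c1), -(a2 + b2 + c2))} :
          Multiset (ℤ × ℤ)) = {(a1, a2), (-a1, -a2), (b1, b2), (-b1, -b2)}
      subst k1 k2
      have e1 : (-(a1 + b1 + -b1), -(a2 + b2 + -b2)) = ((-a1 : ℤ), (-a2 : ℤ)) := by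
        norm_num
      rw [e1]
      exact mswap_last _ _ _ _
end

section
/- Define α_{2n,2m} = (1/(2π)) ∫_{ℝ²} √(y²+z²) H_{2n}(y) H_{2m}(z) e^{-(y²+z²)/2} dy dz. Then α_{0,0} = √(π/2), α_{2,0} = α_{0,2} = (1/2)√(π/2), and α_{0,0}·(−1/√(2π)) + 2 α_{0,2}·(1/√(2π)) = 0. -/
open Real Polynomial Set MeasureTheory

/-!
In polar coordinates the weight `√(y² + z²) e^{-(y² + z²)/2} dy dz` becomes
`r² e^{-r²/2} dr dθ`, so each `α` splits into radial Gaussian moments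
`∫₀^∞ rⁿ e^{-r²/2} dr = 2^{(n-1)/2} Γ((n+1)/2)` (`√(π/2)` for `n = 2`, `3√(π/2)` for `n = 4`)
times angular integrals of `1`, `cos² θ`, `sin² θ` over `(-π, π)`.
-/

namespace Polynomial

lemma aeval_hermite_zero (x : ℝ) : aeval x (hermite 0) = 1 := by
  simp [hermite_zero]

lemma aeval_hermite_two (x : ℝ) : aeval x (hermite 2) = x ^ 2 - 1 := by
  simp [hermite_succ, sq]

end Polynomial

lemma rpow_natCast_mul_exp_neg_half_mul_rpow_two (n : ℕ) (r : ℝ) :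
    r ^ (n : ℝ) * exp (-(1 / 2) * r ^ (2 : ℝ)) = r ^ n * exp (-r ^ 2 / 2) := by
  rw [rpow_natCast, rpow_two]
  ring_nf

lemma integrableOn_Ioi_pow_mul_exp_neg_sq_div_two (n : ℕ) :
    IntegrableOn (fun r : ℝ => r ^ n * exp (-r ^ 2 / 2)) (Ioi 0) := by
  simpa only [rpow_natCast_mul_exp_neg_half_mul_rpow_two] using
    integrableOn_rpow_mul_exp_neg_mul_rpow (p := 2) (s := n) (b := 1 / 2)
      (by linarith [n.cast_nonneg (α := ℝ)]) two_pos one_half_pos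

lemma integral_Ioi_pow_mul_exp_neg_sq_div_two (n : ℕ) :
    ∫ r in Ioi (0 : ℝ), r ^ n * exp (-r ^ 2 / 2) =
      2 ^ (((n : ℝ) - 1) / 2) * Gamma ((n + 1) / 2) := by
  have h := integral_rpow_mul_exp_neg_mul_rpow (p := 2) (q := n) (b := 1 / 2) two_pos
    (by linarith [n.cast_nonneg (α := ℝ)]) one_half_pos
  simp only [rpow_natCast_mul_exp_neg_half_mul_rpow_two] at h
  rw [h, one_div, inv_rpow zero_le_two, ← rpow_neg zero_le_two,
    show -(-((n : ℝ) + 1) / 2) = ((n : ℝ) - 1) / 2 + 1 by ring, rpow_add two_pos, rpow_one]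
  ring

lemma integral_Ioi_sq_mul_exp_neg_sq_div_two :
    ∫ r in Ioi (0 : ℝ), r ^ 2 * exp (-r ^ 2 / 2) = √(π / 2) := by
  rw [integral_Ioi_pow_mul_exp_neg_sq_div_two]
  norm_num
  rw [← sqrt_eq_rpow, show (3 / 2 : ℝ) = 1 / 2 + 1 by norm_num, Gamma_add_one (by norm_num),
    Gamma_one_half_eq, eq_div_iff (by positivity)]
  linear_combination (√π / 2) * mul_self_sqrt (zero_le_two (α := ℝ))

lemma integral_Ioi_pow_four_mul_exp_neg_sq_div_two :
    ∫ r in Ioi (0 : ℝ), r ^ 4 * exp (-r ^ 2 / 2) = 3 * √(π / 2) := by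
  rw [← integral_Ioi_sq_mul_exp_neg_sq_div_two, integral_Ioi_pow_mul_exp_neg_sq_div_two,
    integral_Ioi_pow_mul_exp_neg_sq_div_two]
  norm_num
  rw [show (5 / 2 : ℝ) = 3 / 2 + 1 by norm_num, Gamma_add_one (by norm_num),
    show (3 / 2 : ℝ) = 1 / 2 + 1 by norm_num, rpow_add two_pos, rpow_one]
  ring

lemma integral_sqrt_mul_mul_mul_exp_eq_polar (u v : ℝ → ℝ) :
    ∫ p : ℝ × ℝ, √(p.1 ^ 2 + p.2 ^ 2) * u p.1 * v p.2 * exp (-(p.1 ^ 2 + p.2 ^ 2) / 2) =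
      ∫ q in Ioi (0 : ℝ) ×ˢ Ioo (-π) π,
        q.1 ^ 2 * exp (-q.1 ^ 2 / 2) * (u (q.1 * cos q.2) * v (q.1 * sin q.2)) := by
  rw [← integral_comp_polarCoord_symm, polarCoord_target]
  refine setIntegral_congr_fun (measurableSet_Ioi.prod measurableSet_Ioo) fun q hq => ?_
  have hr : (q.1 * cos q.2) ^ 2 + (q.1 * sin q.2) ^ 2 = q.1 ^ 2 := by
    linear_combination q.1 ^ 2 * cos_sq_add_sin_sq q.2
  simp only [polarCoord_symm_apply, smul_eq_mul, hr, sqrt_sq (le_of_lt hq.1)]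
  ring

lemma integral_Ioo_neg_pi_pi_cos_sq : ∫ θ in Ioo (-π) π, cos θ ^ 2 = π := by
  rw [← integral_Ioc_eq_integral_Ioo, ← intervalIntegral.integral_of_le (by linarith [pi_pos]),
    integral_cos_sq]
  simp

lemma integral_Ioo_neg_pi_pi_sin_sq : ∫ θ in Ioo (-π) π, sin θ ^ 2 = π := by
  rw [← integral_Ioc_eq_integral_Ioo, ← intervalIntegral.integral_of_le (by linarith [pi_pos]),
    integral_sin_sq]
  simp

lemma integrableOn_Ioi_prod_Ioo_pow_mul_exp_mul {g : ℝ → ℝ} (hg : Continuous g) (n : ℕ) :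
    IntegrableOn (fun q : ℝ × ℝ => q.1 ^ n * exp (-q.1 ^ 2 / 2) * g q.2)
      (Ioi 0 ×ˢ Ioo (-π) π) := by
  rw [IntegrableOn, Measure.volume_eq_prod, ← Measure.prod_restrict]
  exact (integrableOn_Ioi_pow_mul_exp_neg_sq_div_two n).mul_prod
    (hg.integrableOn_Icc.mono_set Ioo_subset_Icc_self)

lemma setIntegral_Ioi_prod_Ioo_sq_mul_exp :
    ∫ q in Ioi (0 : ℝ) ×ˢ Ioo (-π) π, q.1 ^ 2 * exp (-q.1 ^ 2 / 2) = 2 * π * √(π / 2) := by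
  have h := setIntegral_prod_mul (μ := volume) (ν := volume)
    (fun r : ℝ => r ^ 2 * exp (-r ^ 2 / 2)) (fun _ : ℝ => (1 : ℝ)) (Ioi 0) (Ioo (-π) π)
  simp only [mul_one, setIntegral_const, smul_eq_mul, measureReal_def, Real.volume_Ioo,
    ← Measure.volume_eq_prod] at h
  rw [h, integral_Ioi_sq_mul_exp_neg_sq_div_two, ENNReal.toReal_ofReal (by linarith [pi_pos])]
  ring

lemma setIntegral_Ioi_prod_Ioo_sq_mul_exp_mul_sq_sub_one {c : ℝ → ℝ} (hc : Continuous c) :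
    ∫ q in Ioi (0 : ℝ) ×ˢ Ioo (-π) π, q.1 ^ 2 * exp (-q.1 ^ 2 / 2) * ((q.1 * c q.2) ^ 2 - 1) =
      √(π / 2) * (3 * ∫ θ in Ioo (-π) π, c θ ^ 2) - 2 * π * √(π / 2) := by
  have hsplit (q : ℝ × ℝ) : q.1 ^ 2 * exp (-q.1 ^ 2 / 2) * ((q.1 * c q.2) ^ 2 - 1) =
      q.1 ^ 4 * exp (-q.1 ^ 2 / 2) * c q.2 ^ 2 - q.1 ^ 2 * exp (-q.1 ^ 2 / 2) := by
    ring
  have hint₄ := integrableOn_Ioi_prod_Ioo_pow_mul_exp_mul (g := fun θ => c θ ^ 2) (hc.pow 2) 4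
  have hint₂ := integrableOn_Ioi_prod_Ioo_pow_mul_exp_mul (g := fun _ => 1) continuous_const 2
  simp only [mul_one] at hint₂
  simp only [hsplit]
  rw [integral_sub hint₄ hint₂,
    setIntegral_Ioi_prod_Ioo_sq_mul_exp, Measure.volume_eq_prod,
    setIntegral_prod_mul (fun r : ℝ => r ^ 4 * exp (-r ^ 2 / 2)) (fun θ => c θ ^ 2),
    integral_Ioi_pow_four_mul_exp_neg_sq_div_two]
  ring

theorem stmt10 (α : ℕ → ℕ → ℝ)
    (hα : ∀ a b : ℕ, α a b = (1 / (2 * π)) *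
      ∫ p : ℝ × ℝ, Real.sqrt (p.1 ^ 2 + p.2 ^ 2) *
        (Polynomial.aeval p.1 (Polynomial.hermite a) : ℝ) *
        (Polynomial.aeval p.2 (Polynomial.hermite b) : ℝ) *
        Real.exp (-(p.1 ^ 2 + p.2 ^ 2) / 2)) :
    α 0 0 = Real.sqrt (π / 2) ∧
    α 2 0 = (1 / 2) * Real.sqrt (π / 2) ∧
    α 0 2 = (1 / 2) * Real.sqrt (π / 2) ∧
    α 0 0 * (-(Real.sqrt (2 * π))⁻¹) + 2 * α 0 2 * (Real.sqrt (2 * π))⁻¹ = 0 := by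
  have hpolar (a b : ℕ) := integral_sqrt_mul_mul_mul_exp_eq_polar
    (fun x => aeval x (hermite a)) (fun x => aeval x (hermite b))
  have h00 : α 0 0 = √(π / 2) := by
    rw [hα, hpolar]
    simp only [aeval_hermite_zero, mul_one]
    rw [setIntegral_Ioi_prod_Ioo_sq_mul_exp]
    field_simp
  have h20 : α 2 0 = 1 / 2 * √(π / 2) := by
    rw [hα, hpolar]
    simp only [aeval_hermite_zero, aeval_hermite_two, mul_one]
    rw [setIntegral_Ioi_prod_Ioo_sq_mul_exp_mul_sq_sub_one continuous_cos,
      integral_Ioo_neg_pi_pi_cos_sq]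
    field_simp
    ring
  have h02 : α 0 2 = 1 / 2 * √(π / 2) := by
    rw [hα, hpolar]
    simp only [aeval_hermite_zero, aeval_hermite_two, one_mul]
    rw [setIntegral_Ioi_prod_Ioo_sq_mul_exp_mul_sq_sub_one continuous_sin,
      integral_Ioo_neg_pi_pi_sin_sq]
    field_simp
    ring
  refine ⟨h00, h20, h02, ?_⟩
  rw [h00, h02]
  ring
end
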